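/- Fix n ≥ 3 and suppose some α_i ≠ 0 (4 ≤ i ≤ n) or ((n-3)θ ≠ 0). Then every even derivation of the Leibniz superalgebra L(α₄,…,α_n,θ) is nilpotent as a linear operator. Consequently, there is no non-nilpotent solvable Leibniz superalgebra whose nilradical is L(α₄,…,α_n,θ) unless α₄ = ⋯ = α_n = θ = 0. -/

import Mathlib

/-!
Write `d y₁ = c y₁ + (terms in y₂, y₃, …)`. Since `e₁ = [y₁, y₁]`, `e₃ = [e₁, e₁]`,
`e_{k+1} = [e_k, e₁]` and `y_{j+1} = [y_j, e₁]`, the Leibniz rule gives, modulo basis vectors of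
higher index, `d e₁ ≡ 2c e₁`, `d e_k ≡ 2(k-1)c e_k` (k ≥ 3) and `d y_j ≡ (2j-1)c y_j`.
Comparing the `e₃`-coefficients of `d[e₁, e₂]` and the `y₂`-coefficients of `d[e₂, y₁]` gives
`d e₂ ≡ 2c e₂`. Now apply `d` to a product with a known leading term `β e_r`: `[e₂, e₂] ≡ α_r e_r`
for the least `r` with `α_r ≠ 0`, or `[e₁, e₂] = θ e_n` when all `α_k` vanish. The two sides of the
Leibniz rule have leading coefficients `2(r-1)cβ` and `4cβ`, so `(r-3)c = 0` and `c = 0`. Hence `d`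
strictly raises the filtration `span {e_s, y_s : s ≥ t}`, so it is nilpotent.
-/

open Finset Submodule

lemma eq_zero_of_smul_mem {K V : Type*} [DivisionRing K] [AddCommGroup V] [Module K V]
    {p : Submodule K V} {v : V} (hv : v ∉ p) {a : K} (h : a • v ∈ p) : a = 0 := by
  by_contra ha
  exact hv ((smul_mem_iff p ha).1 h)

lemma pow_eq_zero_of_le_comap_succ {R M : Type*} [Semiring R] [AddCommMonoid M] [Module R M]
    {d : Module.End R M} {F : ℕ → Submodule R M} (hF : ∀ t, F t ≤ (F (t + 1)).comap d)
    (htop : F 0 = ⊤) {N : ℕ} (hbot : F N = ⊥) : d ^ N = 0 := by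
  have key : ∀ k t, ∀ x ∈ F t, (d ^ k) x ∈ F (t + k) := by
    intro k
    induction k with
    | zero => simp
    | succ k ih =>
      intro t x hx
      rw [pow_succ, Module.End.mul_apply, show t + (k + 1) = t + 1 + k by omega]
      exact ih (t + 1) _ (hF t hx)
  ext x
  simpa [hbot] using key N 0 x (htop ▸ mem_top)

section SpanFrom

variable {R M N : Type*} [Semiring R] [AddCommMonoid M] [Module R M] [AddCommMonoid N] [Module R N]

variable (R) in
def spanFrom (f : ℕ → M) (t : ℕ) : Submodule R M := span R (f '' Set.Ici t)

variable {f : ℕ → M} {s t : ℕ}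

lemma mem_spanFrom (h : t ≤ s) : f s ∈ spanFrom R f t := subset_span ⟨s, h, rfl⟩

lemma spanFrom_anti (h : t ≤ s) : spanFrom R f s ≤ spanFrom R f t :=
  span_mono (Set.image_mono (Set.Ici_subset_Ici.2 h))

lemma spanFrom_le_iff {p : Submodule R M} : spanFrom R f t ≤ p ↔ ∀ s, t ≤ s → f s ∈ p := by
  simp [spanFrom, span_le, Set.subset_def]

lemma apply_mem_of_mem_spanFrom (L : M →ₗ[R] N) {p : Submodule R N}
    (h : ∀ s, t ≤ s → L (f s) ∈ p) {x : M} (hx : x ∈ spanFrom R f t) : L x ∈ p :=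
  (spanFrom_le_iff (p := p.comap L)).2 h hx

lemma exists_eq_smul_add_of_mem_spanFrom {x : M} (hx : x ∈ spanFrom R f t) :
    ∃ c : R, ∃ u ∈ spanFrom R f (t + 1), x = c • f t + u := by
  have hIci : Set.Ici t = insert t (Set.Ici (t + 1)) := by ext; simp; omega
  rw [spanFrom, hIci, Set.image_insert_eq, span_insert, Submodule.mem_sup] at hx
  obtain ⟨_, hy, u, hu, rfl⟩ := hx
  obtain ⟨c, rfl⟩ := mem_span_singleton.1 hy
  exact ⟨c, u, hu, rfl⟩

lemma notMem_spanFrom_succ (φ : M →ₗ[R] R) (ht : φ (f t) ≠ 0) (h : ∀ s, t < s → φ (f s) = 0) :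
    f t ∉ spanFrom R f (t + 1) := fun hmem =>
  ht (apply_mem_of_mem_spanFrom φ (p := ⊥) (fun s hs => by simpa using h s hs) hmem)

lemma pow_eq_zero_of_apply_mem_spanFrom_succ {d : Module.End R M} {g : ℕ → M}
    (hf : ∀ s, d (f s) ∈ spanFrom R f (s + 1))
    (hg : ∀ s, d (g s) ∈ spanFrom R g (s + 1)) (htop : spanFrom R f 0 ⊔ spanFrom R g 0 = ⊤)
    {N : ℕ} (hfN : spanFrom R f N = ⊥) (hgN : spanFrom R g N = ⊥) : d ^ N = 0 := by
  refine pow_eq_zero_of_le_comap_succ (F := fun t => spanFrom R f t ⊔ spanFrom R g t)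
    (fun t => sup_le ?_ ?_) htop (by simp [hfN, hgN])
  · exact spanFrom_le_iff.2 fun s hs => mem_sup_left (spanFrom_anti (by omega) (hf s))
  · exact spanFrom_le_iff.2 fun s hs => mem_sup_right (spanFrom_anti (by omega) (hg s))

end SpanFrom

/- A family `f : ℕ → M` is a window of the basis `b` if `f k = b (e (k - 1))` for `1 ≤ k ≤ m`
and `f k = 0` otherwise; this is how `eN` and `yN` encode `e₁, …, e_n` and `y₁, …, y_{n-1}`. -/
section BasisWindow

variable {ι R M : Type*} [Semiring R] [AddCommMonoid M] [Module R M] (b : Module.Basis ι R M)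
  {m : ℕ} (e : Fin m → ι) {f : ℕ → M}

lemma basis_apply_eq_of_window
    (hf : ∀ k (h : 1 ≤ k ∧ k ≤ m), f k = b (e ⟨k - 1, Nat.sub_one_lt_of_le h.1 h.2⟩))
    (i : Fin m) : b (e i) = f (i + 1) := by
  rw [hf (i + 1) ⟨by omega, by omega⟩]
  simp

lemma span_range_le_spanFrom_one
    (hf : ∀ k (h : 1 ≤ k ∧ k ≤ m), f k = b (e ⟨k - 1, Nat.sub_one_lt_of_le h.1 h.2⟩)) :
    span R (Set.range fun i => b (e i)) ≤ spanFrom R f 1 :=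
  span_le.2 <| Set.range_subset_iff.2 fun i =>
    basis_apply_eq_of_window b e hf i ▸ mem_spanFrom (by omega)

lemma apply_mem_spanFrom_one_of_window
    (hf : ∀ k (h : 1 ≤ k ∧ k ≤ m), f k = b (e ⟨k - 1, Nat.sub_one_lt_of_le h.1 h.2⟩))
    {d : Module.End R M}
    (hd : ∀ x ∈ span R (Set.range fun i => b (e i)), d x ∈ span R (Set.range fun i => b (e i)))
    {k : ℕ} (hk : 1 ≤ k ∧ k ≤ m) : d (f k) ∈ spanFrom R f 1 :=
  span_range_le_spanFrom_one b e hf (hd _ (hf k hk ▸ subset_span ⟨_, rfl⟩))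

lemma spanFrom_eq_bot_of_window (hf0 : ∀ k, ¬(1 ≤ k ∧ k ≤ m) → f k = 0) {t : ℕ} (h : m < t) :
    spanFrom R f t = ⊥ :=
  eq_bot_iff.2 <| spanFrom_le_iff.2 fun s hs => by rw [hf0 s (by omega)]; exact zero_mem _

lemma notMem_spanFrom_succ_of_window [Nontrivial R] (he : Function.Injective e)
    (hf : ∀ k (h : 1 ≤ k ∧ k ≤ m), f k = b (e ⟨k - 1, Nat.sub_one_lt_of_le h.1 h.2⟩))
    (hf0 : ∀ k, ¬(1 ≤ k ∧ k ≤ m) → f k = 0) {r : ℕ} (hr : 1 ≤ r) (hrm : r ≤ m) :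
    f r ∉ spanFrom R f (r + 1) := by
  refine notMem_spanFrom_succ (b.coord (e ⟨r - 1, by omega⟩)) (by simp [hf r ⟨hr, hrm⟩]) ?_
  intro s hs
  by_cases hsm : s ≤ m
  · classical
    rw [hf s ⟨by omega, hsm⟩, Module.Basis.coord_apply, Module.Basis.repr_self,
      Finsupp.single_apply, if_neg (by rw [he.eq_iff, Fin.ext_iff]; simp only; omega)]
  · simp [hf0 s (by omega)]

end BasisWindow

lemma spanFrom_sup_spanFrom_eq_top {R M : Type*} [Semiring R] [AddCommMonoid M] [Module R M]
    {m m' : ℕ} (b : Module.Basis (Fin m ⊕ Fin m') R M) {f g : ℕ → M}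
    (hf : ∀ k (h : 1 ≤ k ∧ k ≤ m), f k = b (Sum.inl ⟨k - 1, Nat.sub_one_lt_of_le h.1 h.2⟩))
    (hg : ∀ k (h : 1 ≤ k ∧ k ≤ m'), g k = b (Sum.inr ⟨k - 1, Nat.sub_one_lt_of_le h.1 h.2⟩)) :
    spanFrom R f 0 ⊔ spanFrom R g 0 = ⊤ := by
  refine eq_top_iff.2 (b.span_eq ▸ span_le.2 (Set.range_subset_iff.2 ?_))
  rintro (i | i)
  · exact basis_apply_eq_of_window b Sum.inl hf i ▸ mem_sup_left (mem_spanFrom (Nat.zero_le _))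
  · exact basis_apply_eq_of_window b Sum.inr hg i ▸ mem_sup_right (mem_spanFrom (Nat.zero_le _))

section Table

variable {K V : Type*} [Field K] [AddCommGroup V] [Module K V]

/- Table (1) with every product stated for all indices, which is consistent because `eN`, `yN`
vanish outside `1, …, n` and `1, …, n - 1`. -/
structure MulTable (n : ℕ) (α : ℕ → K) (θ : K) (eN yN : ℕ → V) (br : V →ₗ[K] V →ₗ[K] V) :
    Prop where
  e1e1 : br (eN 1) (eN 1) = eN 3
  ee1 : ∀ i, 2 ≤ i → br (eN i) (eN 1) = eN (i + 1)
  e1e2 : br (eN 1) (eN 2) = (∑ k ∈ Icc 4 (n - 1), α k • eN k) + θ • eN n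
  ee2 : ∀ i, 2 ≤ i → br (eN i) (eN 2) = ∑ k ∈ Icc 4 n, α k • eN (i + k - 2)
  ee : ∀ i j, 3 ≤ j → br (eN i) (eN j) = 0
  ye1 : ∀ j, 1 ≤ j → br (yN j) (eN 1) = yN (j + 1)
  ye : ∀ j i, 3 ≤ i → br (yN j) (eN i) = 0
  ey1 : ∀ i, 2 ≤ i → br (eN i) (yN 1) = (1 / 2 : K) • yN i
  ey : ∀ i j, 2 ≤ j → br (eN i) (yN j) = 0
  y1y1 : br (yN 1) (yN 1) = eN 1
  yy1 : ∀ j, 2 ≤ j → br (yN j) (yN 1) = eN (j + 1)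
  yy : ∀ j k, 2 ≤ k → br (yN j) (yN k) = 0

lemma MulTable.of_restricted {n : ℕ} (hn : 3 ≤ n) {α : ℕ → K} {θ : K} {eN yN : ℕ → V}
    (heN0 : ∀ k, ¬(1 ≤ k ∧ k ≤ n) → eN k = 0) (hyN0 : ∀ k, ¬(1 ≤ k ∧ k ≤ n - 1) → yN k = 0)
    {br : V →ₗ[K] V →ₗ[K] V}
    (hee1 : ∀ i, 1 ≤ i → i ≤ n → br (eN i) (eN 1) = if i = 1 then eN 3 else eN (i + 1))
    (hee2a : br (eN 1) (eN 2) = (∑ k ∈ Finset.Icc 4 (n - 1), α k • eN k) + θ • eN n)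
    (hee2b : ∀ i, 2 ≤ i → i ≤ n →
      br (eN i) (eN 2) = ∑ k ∈ Finset.Icc 4 n, α k • eN (i + k - 2))
    (hee0 : ∀ i j, 1 ≤ i → i ≤ n → 3 ≤ j → j ≤ n → br (eN i) (eN j) = 0)
    (hye1 : ∀ j, 1 ≤ j → j ≤ n - 1 → br (yN j) (eN 1) = yN (j + 1))
    (hye0 : ∀ j i, 1 ≤ j → j ≤ n - 1 → 3 ≤ i → i ≤ n → br (yN j) (eN i) = 0)
    (hey1 : ∀ i, 1 ≤ i → i ≤ n →
      br (eN i) (yN 1) = if i = 1 then (1 / 2 : K) • yN 2 else (1 / 2 : K) • yN i)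
    (hey0 : ∀ i j, 1 ≤ i → i ≤ n → 2 ≤ j → j ≤ n - 1 → br (eN i) (yN j) = 0)
    (hyy1 : ∀ j, 1 ≤ j → j ≤ n - 1 →
      br (yN j) (yN 1) = if j = 1 then eN 1 else eN (j + 1))
    (hyy0 : ∀ j k, 1 ≤ j → j ≤ n - 1 → 2 ≤ k → k ≤ n - 1 → br (yN j) (yN k) = 0) :
    MulTable n α θ eN yN br where
  e1e1 := by rw [hee1 1 le_rfl (by omega), if_pos rfl]
  ee1 i hi := by
    by_cases hin : i ≤ n
    · rw [hee1 i (by omega) hin, if_neg (by omega)]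
    · simp [heN0 i (by omega), heN0 (i + 1) (by omega)]
  e1e2 := hee2a
  ee2 i hi := by
    by_cases hin : i ≤ n
    · exact hee2b i hi hin
    · rw [heN0 i (by omega), map_zero, LinearMap.zero_apply]
      refine (Finset.sum_eq_zero fun k hk => ?_).symm
      rw [heN0 _ (by simp only [Finset.mem_Icc] at hk; omega), smul_zero]
  ee i j hj := by
    by_cases hi : 1 ≤ i ∧ i ≤ n
    · by_cases hjn : j ≤ n
      · exact hee0 i j hi.1 hi.2 hj hjn
      · simp [heN0 j (by omega)]
    · simp [heN0 i hi]
  ye1 j hj := by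
    by_cases hjn : j ≤ n - 1
    · exact hye1 j hj hjn
    · simp [hyN0 j (by omega), hyN0 (j + 1) (by omega)]
  ye j i hi := by
    by_cases hj : 1 ≤ j ∧ j ≤ n - 1
    · by_cases hin : i ≤ n
      · exact hye0 j i hj.1 hj.2 hi hin
      · simp [heN0 i (by omega)]
    · simp [hyN0 j hj]
  ey1 i hi := by
    by_cases hin : i ≤ n
    · rw [hey1 i (by omega) hin, if_neg (by omega)]
    · simp [heN0 i (by omega), hyN0 i (by omega)]
  ey i j hj := by
    by_cases hi : 1 ≤ i ∧ i ≤ n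
    · by_cases hjn : j ≤ n - 1
      · exact hey0 i j hi.1 hi.2 hj hjn
      · simp [hyN0 j (by omega)]
    · simp [heN0 i hi]
  y1y1 := by rw [hyy1 1 le_rfl (by omega), if_pos rfl]
  yy1 j hj := by
    by_cases hjn : j ≤ n - 1
    · rw [hyy1 j (by omega) hjn, if_neg (by omega)]
    · simp [hyN0 j (by omega), heN0 (j + 1) (by omega)]
  yy j k hk := by
    by_cases hj : 1 ≤ j ∧ j ≤ n - 1
    · by_cases hkn : k ≤ n - 1
      · exact hyy0 j k hj.1 hj.2 hk hkn
      · simp [hyN0 k (by omega)]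
    · simp [hyN0 j hj]

end Table

namespace MulTable

variable {K V : Type*} [Field K] [AddCommGroup V] [Module K V] {n : ℕ} {α : ℕ → K} {θ : K}
  {eN yN : ℕ → V} {br : V →ₗ[K] V →ₗ[K] V} {d : Module.End K V} {c : K} {u v w x : V} {t : ℕ}

lemma br_e_e1_mem (T : MulTable n α θ eN yN br) (ht : 2 ≤ t) (hx : x ∈ spanFrom K eN t) :
    br x (eN 1) ∈ spanFrom K eN (t + 1) :=
  apply_mem_of_mem_spanFrom (br.flip (eN 1))
    (fun s hs => by simpa [T.ee1 s (by omega)] using mem_spanFrom (by omega)) hx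

lemma br_y_e1_mem (T : MulTable n α θ eN yN br) (ht : 1 ≤ t) (hx : x ∈ spanFrom K yN t) :
    br x (eN 1) ∈ spanFrom K yN (t + 1) :=
  apply_mem_of_mem_spanFrom (br.flip (eN 1))
    (fun s hs => by simpa [T.ye1 s (by omega)] using mem_spanFrom (by omega)) hx

lemma br_y_y1_mem (T : MulTable n α θ eN yN br) (ht : 2 ≤ t) (hx : x ∈ spanFrom K yN t) :
    br x (yN 1) ∈ spanFrom K eN (t + 1) :=
  apply_mem_of_mem_spanFrom (br.flip (yN 1))
    (fun s hs => by simpa [T.yy1 s (by omega)] using mem_spanFrom (by omega)) hx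

lemma br_e_y1_mem (T : MulTable n α θ eN yN br) (ht : 2 ≤ t) (hx : x ∈ spanFrom K eN t) :
    br x (yN 1) ∈ spanFrom K yN t :=
  apply_mem_of_mem_spanFrom (br.flip (yN 1))
    (fun s hs => by simpa [T.ey1 s (by omega)] using smul_mem _ _ (mem_spanFrom hs)) hx

lemma br_e_e2_mem (T : MulTable n α θ eN yN br) {r : ℕ} (hα : ∀ k, 4 ≤ k → k < r → α k = 0)
    (ht : 2 ≤ t) (hx : x ∈ spanFrom K eN t) : br x (eN 2) ∈ spanFrom K eN (t + r - 2) := by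
  refine apply_mem_of_mem_spanFrom (br.flip (eN 2)) (fun s hs => ?_) hx
  rw [LinearMap.flip_apply, T.ee2 s (by omega)]
  refine sum_mem fun k hk => ?_
  rw [Finset.mem_Icc] at hk
  by_cases hkr : k < r
  · simp [hα k hk.1 hkr]
  · exact smul_mem _ _ (mem_spanFrom (by omega))

lemma br_e2_e2_sub_mem (T : MulTable n α θ eN yN br) {r : ℕ}
    (hα : ∀ k, 4 ≤ k → k < r → α k = 0) (hr : 4 ≤ r) (hrn : r ≤ n) :
    br (eN 2) (eN 2) - α r • eN r ∈ spanFrom K eN (r + 1) := by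
  classical
  rw [T.ee2 2 le_rfl, ← Finset.add_sum_erase _ _ (Finset.mem_Icc.2 ⟨hr, hrn⟩),
    show 2 + r - 2 = r by omega, add_sub_cancel_left]
  refine sum_mem fun k hk => ?_
  obtain ⟨hkr, hk⟩ := Finset.mem_erase.1 hk
  rw [Finset.mem_Icc] at hk
  rcases lt_or_gt_of_ne hkr with h | h
  · simp [hα k hk.1 h]
  · exact smul_mem _ _ (mem_spanFrom (by omega))

lemma br_e_e_eq_zero (T : MulTable n α θ eN yN br) (i : ℕ) (hx : x ∈ spanFrom K eN 3) :
    br (eN i) x = 0 :=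
  (mem_bot K).1 <| apply_mem_of_mem_spanFrom (br (eN i)) (fun s hs => by simp [T.ee i s hs]) hx

lemma br_y_e_eq_zero (T : MulTable n α θ eN yN br) (j : ℕ) (hx : x ∈ spanFrom K eN 3) :
    br (yN j) x = 0 :=
  (mem_bot K).1 <| apply_mem_of_mem_spanFrom (br (yN j)) (fun s hs => by simp [T.ye j s hs]) hx

lemma br_e_y_eq_zero (T : MulTable n α θ eN yN br) (i : ℕ) (hx : x ∈ spanFrom K yN 2) :
    br (eN i) x = 0 :=
  (mem_bot K).1 <| apply_mem_of_mem_spanFrom (br (eN i)) (fun s hs => by simp [T.ey i s hs]) hx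

lemma br_y_y_eq_zero (T : MulTable n α θ eN yN br) (j : ℕ) (hx : x ∈ spanFrom K yN 2) :
    br (yN j) x = 0 :=
  (mem_bot K).1 <| apply_mem_of_mem_spanFrom (br (yN j)) (fun s hs => by simp [T.yy j s hs]) hx

lemma deriv_e1 (T : MulTable n α θ eN yN br)
    (hder : ∀ a b, d (br a b) = br (d a) b + br a (d b))
    (hu : u ∈ spanFrom K yN 2) (hy1 : d (yN 1) = c • yN 1 + u) :
    ∃ w ∈ spanFrom K eN 3, d (eN 1) = (2 * c) • eN 1 + w := by
  refine ⟨br u (yN 1), T.br_y_y1_mem le_rfl hu, ?_⟩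
  rw [← T.y1y1, hder, hy1]
  simp only [map_add, map_smul, LinearMap.add_apply, LinearMap.smul_apply, T.y1y1,
    T.br_y_y_eq_zero 1 hu]
  module

lemma deriv_e (T : MulTable n α θ eN yN br)
    (hder : ∀ a b, d (br a b) = br (d a) b + br a (d b))
    (hw : w ∈ spanFrom K eN 3) (he1 : d (eN 1) = (2 * c) • eN 1 + w) :
    ∀ k, 3 ≤ k → ∃ u ∈ spanFrom K eN (k + 1), d (eN k) = (2 * ((k : K) - 1) * c) • eN k + u := by
  intro k hk
  induction k, hk using Nat.le_induction with
  | base =>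
    refine ⟨br w (eN 1), T.br_e_e1_mem (by norm_num) hw, ?_⟩
    rw [← T.e1e1, hder, he1]
    simp only [map_add, map_smul, LinearMap.add_apply, LinearMap.smul_apply, T.e1e1,
      T.br_e_e_eq_zero 1 hw]
    norm_num
    module
  | succ k hk ih =>
    obtain ⟨u, hu, hek⟩ := ih
    refine ⟨br u (eN 1), T.br_e_e1_mem (by omega) hu, ?_⟩
    rw [← T.ee1 k (by omega), hder, hek, he1]
    simp only [map_add, map_smul, LinearMap.add_apply, LinearMap.smul_apply, T.ee1 k (by omega),
      T.br_e_e_eq_zero k hw]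
    push_cast
    module

lemma deriv_mem_spanFrom_e (T : MulTable n α θ eN yN br)
    (hder : ∀ a b, d (br a b) = br (d a) b + br a (d b))
    (hw : w ∈ spanFrom K eN 3) (he1 : d (eN 1) = (2 * c) • eN 1 + w) (ht : 3 ≤ t)
    (hx : x ∈ spanFrom K eN t) : d x ∈ spanFrom K eN t := by
  refine apply_mem_of_mem_spanFrom d (fun s hs => ?_) hx
  obtain ⟨u, hu, hes⟩ := T.deriv_e hder hw he1 s (by omega)
  rw [hes]
  exact add_mem (smul_mem _ _ (mem_spanFrom hs)) (spanFrom_anti (by omega) hu)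

lemma deriv_y (T : MulTable n α θ eN yN br)
    (hder : ∀ a b, d (br a b) = br (d a) b + br a (d b))
    (hu : u ∈ spanFrom K yN 2) (hy1 : d (yN 1) = c • yN 1 + u)
    (hw : w ∈ spanFrom K eN 3) (he1 : d (eN 1) = (2 * c) • eN 1 + w) :
    ∀ j, 1 ≤ j → ∃ u ∈ spanFrom K yN (j + 1), d (yN j) = ((2 * j - 1) * c) • yN j + u := by
  intro j hj
  induction j, hj using Nat.le_induction with
  | base => exact ⟨u, hu, by rw [hy1]; norm_num⟩
  | succ j hj ih =>
    obtain ⟨u, hu, hyj⟩ := ih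
    refine ⟨br u (eN 1), T.br_y_e1_mem (by omega) hu, ?_⟩
    rw [← T.ye1 j hj, hder, hyj, he1]
    simp only [map_add, map_smul, LinearMap.add_apply, LinearMap.smul_apply, T.ye1 j hj,
      T.br_y_e_eq_zero j hw]
    push_cast
    module

lemma coeff_e1_eq_zero (T : MulTable n α θ eN yN br) (hn : 4 ≤ n)
    (hder : ∀ a b, d (br a b) = br (d a) b + br a (d b))
    (hw : w ∈ spanFrom K eN 3) (he1 : d (eN 1) = (2 * c) • eN 1 + w)
    {b₁ b₂ : K} (hv : v ∈ spanFrom K eN 3) (he2 : d (eN 2) = b₁ • eN 1 + (b₂ • eN 2 + v))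
    (he3 : eN 3 ∉ spanFrom K eN 4) : b₁ = 0 := by
  have hP : br (eN 1) (eN 2) ∈ spanFrom K eN 4 := by
    rw [T.e1e2]
    refine add_mem (sum_mem fun k hk => smul_mem _ _ (mem_spanFrom ?_))
      (smul_mem _ _ (mem_spanFrom hn))
    exact (Finset.mem_Icc.1 hk).1
  have hwe2 : br w (eN 2) ∈ spanFrom K eN 4 :=
    spanFrom_anti (by norm_num) (T.br_e_e2_mem (r := 4) (by omega) (by norm_num) hw)
  have hdP := T.deriv_mem_spanFrom_e hder hw he1 (by norm_num) hP
  have key : b₁ • eN 3 = d (br (eN 1) (eN 2)) - (2 * c + b₂) • br (eN 1) (eN 2) - br w (eN 2) := by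
    rw [hder, he1, he2]
    simp only [map_add, map_smul, LinearMap.add_apply, LinearMap.smul_apply, T.e1e1,
      T.br_e_e_eq_zero 1 hv]
    module
  refine eq_zero_of_smul_mem he3 ?_
  rw [key]
  exact sub_mem (sub_mem hdP (smul_mem _ _ hP)) hwe2

lemma coeff_e2_eq_two_mul [CharZero K] (T : MulTable n α θ eN yN br)
    (hder : ∀ a b, d (br a b) = br (d a) b + br a (d b))
    (hu : u ∈ spanFrom K yN 2) (hy1 : d (yN 1) = c • yN 1 + u)
    (hw : w ∈ spanFrom K eN 3) (he1 : d (eN 1) = (2 * c) • eN 1 + w)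
    {b₂ : K} (hv : v ∈ spanFrom K eN 3) (he2 : d (eN 2) = b₂ • eN 2 + v)
    (hy2 : yN 2 ∉ spanFrom K yN 3) : b₂ = 2 * c := by
  obtain ⟨u₂, hu₂, hdy2⟩ := T.deriv_y hder hu hy1 hw he1 2 (by norm_num)
  have key : (c - b₂ / 2) • yN 2 = br v (yN 1) - (1 / 2 : K) • u₂ := by
    have h := hder (eN 2) (yN 1)
    rw [T.ey1 2 le_rfl, map_smul, hdy2, he2, hy1] at h
    simp only [map_add, map_smul, LinearMap.add_apply, LinearMap.smul_apply, T.ey1 2 le_rfl,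
      T.br_e_y_eq_zero 2 hu] at h
    push_cast at h
    linear_combination (norm := module) h
  have hcoeff := eq_zero_of_smul_mem hy2 <|
    key ▸ sub_mem (T.br_e_y1_mem (by norm_num) hv) (smul_mem _ _ hu₂)
  linear_combination -2 * hcoeff

lemma coeff_eq_zero_of_leading [CharZero K] (T : MulTable n α θ eN yN br)
    (hder : ∀ a b, d (br a b) = br (d a) b + br a (d b))
    (hw : w ∈ spanFrom K eN 3) (he1 : d (eN 1) = (2 * c) • eN 1 + w)
    (hv : v ∈ spanFrom K eN 3) (he2 : d (eN 2) = (2 * c) • eN 2 + v)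
    {i : ℕ} {w' : V} (hw' : w' ∈ spanFrom K eN 3) (hei : d (eN i) = (2 * c) • eN i + w')
    {r : ℕ} (hr : 4 ≤ r) (hα : ∀ k, 4 ≤ k → k < r → α k = 0) {β : K}
    (hlead : br (eN i) (eN 2) - β • eN r ∈ spanFrom K eN (r + 1)) (hβ : β ≠ 0)
    (her : eN r ∉ spanFrom K eN (r + 1)) : c = 0 := by
  obtain ⟨ur, hur, hder_r⟩ := T.deriv_e hder hw he1 r (by omega)
  set u₀ := br (eN i) (eN 2) - β • eN r with hu₀
  have hP : br (eN i) (eN 2) = β • eN r + u₀ := by rw [hu₀]; abel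
  have h := hder (eN i) (eN 2)
  rw [hei, he2] at h
  simp only [map_add, map_smul, LinearMap.add_apply, LinearMap.smul_apply,
    T.br_e_e_eq_zero i hv] at h
  rw [hP, map_add, map_smul, hder_r] at h
  have key : (β * (2 * ((r : K) - 1) * c) - 4 * c * β) • eN r
      = (4 * c) • u₀ + br w' (eN 2) - β • ur - d u₀ := by
    linear_combination (norm := module) h
  have hw'2 : br w' (eN 2) ∈ spanFrom K eN (r + 1) := by
    simpa [show 3 + r - 2 = r + 1 by omega] using T.br_e_e2_mem hα (by norm_num) hw'
  have hcoeff := eq_zero_of_smul_mem her <| key ▸ sub_mem (sub_mem (add_mem (smul_mem _ _ hlead)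
    hw'2) (smul_mem _ _ hur)) (T.deriv_mem_spanFrom_e hder hw he1 (by omega) hlead)
  have hr3 : (r : K) - 3 ≠ 0 := sub_ne_zero.2 (by exact_mod_cast (by omega : r ≠ 3))
  have : 2 * β * ((r : K) - 3) * c = 0 := by linear_combination hcoeff
  simpa [hβ, hr3] using this

lemma coeff_eq_zero [CharZero K] (T : MulTable n α θ eN yN br) (hn : 4 ≤ n)
    (hder : ∀ a b, d (br a b) = br (d a) b + br a (d b))
    (hw : w ∈ spanFrom K eN 3) (he1 : d (eN 1) = (2 * c) • eN 1 + w)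
    (hv : v ∈ spanFrom K eN 3) (he2 : d (eN 2) = (2 * c) • eN 2 + v)
    (hnz : (∃ i, 4 ≤ i ∧ i ≤ n ∧ α i ≠ 0) ∨ ((n : K) - 3) * θ ≠ 0)
    (hnot : ∀ r, 1 ≤ r → r ≤ n → eN r ∉ spanFrom K eN (r + 1)) : c = 0 := by
  classical
  by_cases hα : ∃ r, 4 ≤ r ∧ r ≤ n ∧ α r ≠ 0
  · obtain ⟨hr, hrn, hαr⟩ := Nat.find_spec hα
    have hmin : ∀ k, 4 ≤ k → k < Nat.find hα → α k = 0 := fun k hk hkr => by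
      by_contra h
      exact Nat.find_min hα hkr ⟨hk, by omega, h⟩
    exact T.coeff_eq_zero_of_leading hder hw he1 hv he2 hv he2 hr hmin
      (T.br_e2_e2_sub_mem hmin hr hrn) hαr (hnot _ (by omega) hrn)
  · push Not at hα
    have hθ := hnz.resolve_left fun ⟨r, hr, hrn, hαr⟩ => hαr (hα r hr hrn)
    refine T.coeff_eq_zero_of_leading hder hw he1 hv he2 hw he1 hn
      (fun k hk hkn => hα k hk hkn.le) ?_ (right_ne_zero_of_mul hθ) (hnot n (by omega) le_rfl)
    rw [T.e1e2, Finset.sum_eq_zero fun k hk => by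
      rw [hα k (Finset.mem_Icc.1 hk).1 (by have := (Finset.mem_Icc.1 hk).2; omega), zero_smul]]
    simp

lemma deriv_e_mem_spanFrom_succ (T : MulTable n α θ eN yN br)
    (hder : ∀ a b, d (br a b) = br (d a) b + br a (d b)) (he0 : eN 0 = 0)
    (he1 : d (eN 1) ∈ spanFrom K eN 3) (he2 : d (eN 2) ∈ spanFrom K eN 3) :
    ∀ s, d (eN s) ∈ spanFrom K eN (s + 1)
  | 0 => by simp [he0]
  | 1 => spanFrom_anti (by norm_num) he1
  | 2 => he2
  | s + 3 => by
    obtain ⟨u, hu, h⟩ := T.deriv_e hder he1 (c := 0) (by simp) (s + 3) (by omega)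
    simpa [h] using hu

lemma deriv_y_mem_spanFrom_succ (T : MulTable n α θ eN yN br)
    (hder : ∀ a b, d (br a b) = br (d a) b + br a (d b)) (hy0 : yN 0 = 0)
    (hy1 : d (yN 1) ∈ spanFrom K yN 2) (he1 : d (eN 1) ∈ spanFrom K eN 3) :
    ∀ j, d (yN j) ∈ spanFrom K yN (j + 1)
  | 0 => by simp [hy0]
  | j + 1 => by
    obtain ⟨u, hu, h⟩ := T.deriv_y hder hy1 (c := 0) (by simp) he1 (by simp) (j + 1) (by omega)
    simpa [h] using hu

end MulTable

/-- If some α_i ≠ 0 (4 ≤ i ≤ n) or (n-3)θ ≠ 0, then every even derivation of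
L(α₄,…,α_n,θ) is nilpotent. -/
theorem statement8 {V : Type*} [AddCommGroup V] [Module ℂ V]
    (n : ℕ) (hn : 3 ≤ n) (α : ℕ → ℂ) (θ : ℂ)
    (bas : Module.Basis (Fin n ⊕ Fin (n - 1)) ℂ V)
    (eN yN : ℕ → V)
    (heN : ∀ k (h : 1 ≤ k ∧ k ≤ n), eN k = bas (Sum.inl ⟨k - 1, by omega⟩))
    (heN0 : ∀ k, ¬(1 ≤ k ∧ k ≤ n) → eN k = 0)
    (hyN : ∀ k (h : 1 ≤ k ∧ k ≤ n - 1), yN k = bas (Sum.inr ⟨k - 1, by omega⟩))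
    (hyN0 : ∀ k, ¬(1 ≤ k ∧ k ≤ n - 1) → yN k = 0)
    (br : V →ₗ[ℂ] V →ₗ[ℂ] V)
    -- multiplication table (1):
    (hee1 : ∀ i, 1 ≤ i → i ≤ n → br (eN i) (eN 1) = if i = 1 then eN 3 else eN (i + 1))
    (hee2a : br (eN 1) (eN 2) = (∑ k ∈ Finset.Icc 4 (n - 1), α k • eN k) + θ • eN n)
    (hee2b : ∀ i, 2 ≤ i → i ≤ n →
      br (eN i) (eN 2) = ∑ k ∈ Finset.Icc 4 n, α k • eN (i + k - 2))
    (hee0 : ∀ i j, 1 ≤ i → i ≤ n → 3 ≤ j → j ≤ n → br (eN i) (eN j) = 0)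
    (hye1 : ∀ j, 1 ≤ j → j ≤ n - 1 → br (yN j) (eN 1) = yN (j + 1))
    (hye0 : ∀ j i, 1 ≤ j → j ≤ n - 1 → 3 ≤ i → i ≤ n → br (yN j) (eN i) = 0)
    (hey1 : ∀ i, 1 ≤ i → i ≤ n →
      br (eN i) (yN 1) = if i = 1 then (1 / 2 : ℂ) • yN 2 else (1 / 2 : ℂ) • yN i)
    (hey0 : ∀ i j, 1 ≤ i → i ≤ n → 2 ≤ j → j ≤ n - 1 → br (eN i) (yN j) = 0)
    (hyy1 : ∀ j, 1 ≤ j → j ≤ n - 1 →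
      br (yN j) (yN 1) = if j = 1 then eN 1 else eN (j + 1))
    (hyy0 : ∀ j k, 1 ≤ j → j ≤ n - 1 → 2 ≤ k → k ≤ n - 1 → br (yN j) (yN k) = 0)
    -- d is an even derivation:
    (d : Module.End ℂ V)
    (hdE : ∀ x ∈ Submodule.span ℂ (Set.range fun i : Fin n => bas (Sum.inl i)),
      d x ∈ Submodule.span ℂ (Set.range fun i : Fin n => bas (Sum.inl i)))
    (hdY : ∀ x ∈ Submodule.span ℂ (Set.range fun j : Fin (n - 1) => bas (Sum.inr j)),
      d x ∈ Submodule.span ℂ (Set.range fun j : Fin (n - 1) => bas (Sum.inr j)))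
    (hder : ∀ u v : V, d (br u v) = br (d u) v + br u (d v))
    (hnz : (∃ i, 4 ≤ i ∧ i ≤ n ∧ α i ≠ 0) ∨ ((n : ℂ) - 3) * θ ≠ 0) :
    ∃ N : ℕ, d ^ N = 0 := by
  have T := MulTable.of_restricted hn heN0 hyN0 hee1 hee2a hee2b hee0 hye1 hye0 hey1 hey0 hyy1 hyy0
  have hn4 : 4 ≤ n := by
    rcases hnz with ⟨i, hi, hin, -⟩ | h
    · omega
    · exact lt_of_le_of_ne hn (by rintro rfl; norm_num at h)
  have hnotE : ∀ r, 1 ≤ r → r ≤ n → eN r ∉ spanFrom ℂ eN (r + 1) := fun r =>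
    notMem_spanFrom_succ_of_window bas Sum.inl Sum.inl_injective heN heN0
  obtain ⟨c, u, hu, hy1⟩ := exists_eq_smul_add_of_mem_spanFrom
    (apply_mem_spanFrom_one_of_window bas Sum.inr hyN hdY ⟨le_rfl, by omega⟩)
  obtain ⟨w, hw, he1⟩ := T.deriv_e1 hder hu hy1
  obtain ⟨b₁, v₁, hv₁, he2⟩ := exists_eq_smul_add_of_mem_spanFrom
    (apply_mem_spanFrom_one_of_window bas Sum.inl heN hdE (k := 2) ⟨by omega, by omega⟩)
  obtain ⟨b₂, v, hv, rfl⟩ := exists_eq_smul_add_of_mem_spanFrom hv₁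
  rw [T.coeff_e1_eq_zero hn4 hder hw he1 hv he2 (hnotE 3 (by omega) (by omega)), zero_smul,
    zero_add] at he2
  rw [T.coeff_e2_eq_two_mul hder hu hy1 hw he1 hv he2 (notMem_spanFrom_succ_of_window bas Sum.inr
    Sum.inr_injective hyN hyN0 (r := 2) (by omega) (by omega))] at he2
  obtain rfl := T.coeff_eq_zero hn4 hder hw he1 hv he2 hnz hnotE
  refine ⟨n + 1, pow_eq_zero_of_apply_mem_spanFrom_succ
    (T.deriv_e_mem_spanFrom_succ hder (heN0 0 (by omega)) (by simpa [he1] using hw)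
      (by simpa [he2] using hv))
    (T.deriv_y_mem_spanFrom_succ hder (hyN0 0 (by omega)) (by simpa [hy1] using hu)
      (by simpa [he1] using hw))
    (spanFrom_sup_spanFrom_eq_top bas heN hyN) (spanFrom_eq_bot_of_window heN0 (by omega))
    (spanFrom_eq_bot_of_window hyN0 (by omega))⟩
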